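/- arXiv:1604.08470 — 2 statements merged into one kernel-verified Lean document; each statement's English description precedes it below -/
import Mathlib

section
/- For an exponential family density f(x; π) ∝ exp(π^T t(x)) on a compact oriented Riemannian manifold, the score matching objective Ψ(f; F*) = (1/2) E[⟨log f, log f⟩ + 2 Δ_M log f] is the quadratic function Ψ = (1/2) π^T W π − π^T d, where W has entries w_{ℓ₁ℓ₂} = E[⟨t_{ℓ₁}, t_{ℓ₂}⟩(x)] and d has entries d_ℓ = −E[Δ_M t_ℓ(x)], with expectations taken under F*. -/
open MeasureTheory

/-- For an exponential family `log f(x;π) = ∑ πℓ tℓ(x) + const` on a compact oriented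
Riemannian manifold (with bilinear gradient inner product operator `B` and linear
Laplace–Beltrami operator `lap` annihilating constants), the score matching objective
`Ψ = (1/2) E[⟨log f, log f⟩ + 2 Δ log f]` equals `(1/2) πᵀ W π − πᵀ d` with
`w_{ℓ₁ℓ₂} = E⟨t_{ℓ₁}, t_{ℓ₂}⟩` and `d_ℓ = −E[Δ t_ℓ]`. -/
theorem stmt_3 {M : Type*} [MeasurableSpace M] (μ : Measure M) [IsProbabilityMeasure μ]
    {m : ℕ} (t : Fin m → M → ℝ) (π : Fin m → ℝ) (c : ℝ)
    (B : (M → ℝ) → (M → ℝ) → M → ℝ) (lap : (M → ℝ) → M → ℝ)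
    (hBaddl : ∀ u v w : M → ℝ, B (fun x => u x + v x) w = fun x => B u w x + B v w x)
    (hBsmull : ∀ (a : ℝ) (u w : M → ℝ), B (fun x => a * u x) w = fun x => a * B u w x)
    (hBsymm : ∀ u v : M → ℝ, B u v = B v u)
    (hBconst : ∀ (a : ℝ) (w : M → ℝ), B (fun _ => a) w = fun _ => 0)
    (hlapadd : ∀ u v : M → ℝ, lap (fun x => u x + v x) = fun x => lap u x + lap v x)
    (hlapsmul : ∀ (a : ℝ) (u : M → ℝ), lap (fun x => a * u x) = fun x => a * lap u x)
    (hlapconst : ∀ a : ℝ, lap (fun _ => a) = fun _ => 0)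
    (hintB : ∀ ℓ₁ ℓ₂, Integrable (B (t ℓ₁) (t ℓ₂)) μ)
    (hintlap : ∀ ℓ, Integrable (lap (t ℓ)) μ)
    (L : M → ℝ) (hL : L = fun x => (∑ ℓ, π ℓ * t ℓ x) + c)
    (W : Matrix (Fin m) (Fin m) ℝ)
    (hW : ∀ ℓ₁ ℓ₂, W ℓ₁ ℓ₂ = ∫ x, B (t ℓ₁) (t ℓ₂) x ∂μ)
    (d : Fin m → ℝ)
    (hd : ∀ ℓ, d ℓ = -∫ x, lap (t ℓ) x ∂μ) :
    (1/2) * ∫ x, (B L L x + 2 * lap L x) ∂μ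
      = (1/2) * (∑ ℓ₁, ∑ ℓ₂, π ℓ₁ * W ℓ₁ ℓ₂ * π ℓ₂) - ∑ ℓ, π ℓ * d ℓ := by
  -- finite sum linearity for B (left argument)
  have Bsum : ∀ (g : Fin m → M → ℝ) (w : M → ℝ) (s : Finset (Fin m)),
      B (fun x => ∑ ℓ ∈ s, g ℓ x) w = fun x => ∑ ℓ ∈ s, B (g ℓ) w x := by
    intro g w s
    induction s using Finset.induction with
    | empty => simpa using hBconst 0 w
    | @insert a s' h ih =>
      have : (fun x => ∑ ℓ ∈ insert a s', g ℓ x)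
          = fun x => g a x + ∑ ℓ ∈ s', g ℓ x := by
        funext x; rw [Finset.sum_insert h]
      rw [this, hBaddl, ih]
      funext x; rw [Finset.sum_insert h]
  have lapsum : ∀ (g : Fin m → M → ℝ) (s : Finset (Fin m)),
      lap (fun x => ∑ ℓ ∈ s, g ℓ x) = fun x => ∑ ℓ ∈ s, lap (g ℓ) x := by
    intro g s
    induction s using Finset.induction with
    | empty => simpa using hlapconst 0
    | @insert a s' h ih =>
      have : (fun x => ∑ ℓ ∈ insert a s', g ℓ x)
          = fun x => g a x + ∑ ℓ ∈ s', g ℓ x := by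
        funext x; rw [Finset.sum_insert h]
      rw [this, hlapadd, ih]
      funext x; rw [Finset.sum_insert h]
  -- expand B L w for any w
  have hBLw : ∀ w : M → ℝ, B L w = fun x => ∑ ℓ, π ℓ * B (t ℓ) w x := by
    intro w
    rw [hL, hBaddl, hBconst, Bsum]
    funext x
    simp only [add_zero]
    refine Finset.sum_congr rfl fun ℓ _ => ?_
    rw [hBsmull]
  have hBLL : B L L = fun x => ∑ ℓ₁, ∑ ℓ₂, π ℓ₁ * (π ℓ₂ * B (t ℓ₁) (t ℓ₂) x) := by
    rw [hBLw]
    funext x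
    refine Finset.sum_congr rfl fun ℓ₁ _ => ?_
    have : B (t ℓ₁) L = fun x => ∑ ℓ₂, π ℓ₂ * B (t ℓ₁) (t ℓ₂) x := by
      rw [hBsymm, hBLw]
      funext y
      refine Finset.sum_congr rfl fun ℓ₂ _ => ?_
      rw [hBsymm]
    rw [this, Finset.mul_sum]
  have hlapL : lap L = fun x => ∑ ℓ, π ℓ * lap (t ℓ) x := by
    rw [hL]
    have : (fun x => (∑ ℓ, π ℓ * t ℓ x) + c)
        = fun x => (∑ ℓ, π ℓ * t ℓ x) + (fun _ : M => c) x := rfl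
    rw [this, hlapadd, hlapconst, lapsum]
    funext x
    simp only [add_zero]
    refine Finset.sum_congr rfl fun ℓ _ => ?_
    rw [hlapsmul]
  -- rewrite the integrand
  have hInt : (fun x => B L L x + 2 * lap L x)
      = fun x => (∑ ℓ₁, ∑ ℓ₂, π ℓ₁ * (π ℓ₂ * B (t ℓ₁) (t ℓ₂) x))
          + ∑ ℓ, 2 * (π ℓ * lap (t ℓ) x) := by
    funext x
    rw [hBLL, hlapL]
    rw [Finset.mul_sum]
  have int1 : ∀ ℓ₁, Integrable (fun x => ∑ ℓ₂, π ℓ₁ * (π ℓ₂ * B (t ℓ₁) (t ℓ₂) x)) μ := by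
    intro ℓ₁
    exact integrable_finset_sum _ fun ℓ₂ _ => (((hintB ℓ₁ ℓ₂).const_mul _).const_mul _)
  have int2 : Integrable (fun x => ∑ ℓ₁, ∑ ℓ₂, π ℓ₁ * (π ℓ₂ * B (t ℓ₁) (t ℓ₂) x)) μ :=
    integrable_finset_sum _ fun ℓ₁ _ => int1 ℓ₁
  have int3 : Integrable (fun x => ∑ ℓ, 2 * (π ℓ * lap (t ℓ) x)) μ :=
    integrable_finset_sum _ fun ℓ _ => (((hintlap ℓ).const_mul _).const_mul _)
  calc (1/2) * ∫ x, (B L L x + 2 * lap L x) ∂μ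
      = (1/2) * ((∫ x, ∑ ℓ₁, ∑ ℓ₂, π ℓ₁ * (π ℓ₂ * B (t ℓ₁) (t ℓ₂) x) ∂μ)
          + ∫ x, ∑ ℓ, 2 * (π ℓ * lap (t ℓ) x) ∂μ) := by
        rw [show (∫ x, (B L L x + 2 * lap L x) ∂μ)
            = ∫ x, ((∑ ℓ₁, ∑ ℓ₂, π ℓ₁ * (π ℓ₂ * B (t ℓ₁) (t ℓ₂) x))
              + ∑ ℓ, 2 * (π ℓ * lap (t ℓ) x)) ∂μ from by rw [← hInt]]
        rw [integral_add int2 int3]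
    _ = (1/2) * ((∑ ℓ₁, ∑ ℓ₂, π ℓ₁ * W ℓ₁ ℓ₂ * π ℓ₂) + ∑ ℓ, 2 * (π ℓ * (-(d ℓ)))) := by
        congr 1
        congr 1
        · rw [integral_finset_sum _ fun ℓ₁ _ => int1 ℓ₁]
          refine Finset.sum_congr rfl fun ℓ₁ _ => ?_
          rw [integral_finset_sum _ fun ℓ₂ _ => (((hintB ℓ₁ ℓ₂).const_mul _).const_mul _)]
          refine Finset.sum_congr rfl fun ℓ₂ _ => ?_
          rw [integral_const_mul, integral_const_mul, hW ℓ₁ ℓ₂]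
          ring
        · rw [integral_finset_sum _ fun ℓ _ => (((hintlap ℓ).const_mul _).const_mul _)]
          refine Finset.sum_congr rfl fun ℓ _ => ?_
          rw [integral_const_mul, integral_const_mul, hd ℓ]
          ring
    _ = (1/2) * (∑ ℓ₁, ∑ ℓ₂, π ℓ₁ * W ℓ₁ ℓ₂ * π ℓ₂) - ∑ ℓ, π ℓ * d ℓ := by
        rw [mul_add, Finset.mul_sum]
        have h2 : (1/2 : ℝ) * ∑ ℓ, 2 * (π ℓ * (-(d ℓ))) = -∑ ℓ, π ℓ * d ℓ := by
          rw [Finset.mul_sum, ← Finset.sum_neg_distrib]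
          exact Finset.sum_congr rfl fun ℓ _ => by ring
        rw [h2]; ring
end

section
/- As κ → 0⁺, both asymptotic variances n·var(κ̂_MLE) = 1/(1 − A₁(κ)² − A₁(κ)/κ) and n·var(κ̂_SME) = (κ/A₁(κ)²)(2κ − 3A₁(κ)) converge to 2; hence the asymptotic relative efficiency ARE(κ) → 1 as κ → 0⁺. -/
open Real Filter intervalIntegral

/-- Modified Bessel function of the first kind of integer order `ν`. -/
noncomputable def besselI (ν : ℕ) (κ : ℝ) : ℝ :=
  (1 / π) * ∫ θ in (0:ℝ)..π, Real.exp (κ * Real.cos θ) * Real.cos (ν * θ)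

/-- `A₁(κ) = I₁(κ)/I₀(κ)`. -/
noncomputable def A1 (κ : ℝ) : ℝ := besselI 1 κ / besselI 0 κ

/-!
Bounding the integrands by `|exp x - 1| ≤ 2|x|` and `|exp x - 1 - x| ≤ x²` gives
`I₀(κ) = 1 + O(κ)` and `I₁(κ) = κ/2 + O(κ²)`, so `A₁(κ) → 0` and `A₁(κ)/κ → 1/2`.
After dividing numerators and denominators by the right power of `κ`, the three expressions
are continuous functions of `A₁` and `A₁/κ`, with values `2`, `2` and `1` at `(0, 1/2)`.
-/

open Topology

lemma abs_inv_pi_mul_integral_le {f : ℝ → ℝ} {B : ℝ} (hf : ∀ θ, |f θ| ≤ B) :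
    |1 / π * ∫ θ in (0:ℝ)..π, f θ| ≤ B := by
  have h := norm_integral_le_of_norm_le_const (a := 0) (b := π) fun θ _ =>
    (Real.norm_eq_abs (f θ)).trans_le (hf θ)
  rw [sub_zero, abs_of_pos pi_pos, Real.norm_eq_abs] at h
  rw [abs_mul, abs_of_pos (by positivity : (0:ℝ) < 1 / π)]
  calc 1 / π * |∫ θ in (0:ℝ)..π, f θ| ≤ 1 / π * (B * π) := by gcongr
    _ = B := by field_simp

lemma abs_mul_cos_le (κ θ : ℝ) : |κ * cos θ| ≤ |κ| := by
  rw [abs_mul]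
  exact mul_le_of_le_one_right (abs_nonneg κ) (abs_cos_le_one θ)

lemma besselI_zero_sub_one (κ : ℝ) :
    besselI 0 κ - 1 = 1 / π * ∫ θ in (0:ℝ)..π, (exp (κ * cos θ) - 1) := by
  rw [integral_sub ((by fun_prop : Continuous _).intervalIntegrable _ _) intervalIntegrable_const]
  simp [besselI, mul_sub, pi_pos.ne']

lemma besselI_one_sub_half (κ : ℝ) :
    besselI 1 κ - κ / 2 =
      1 / π * ∫ θ in (0:ℝ)..π, (exp (κ * cos θ) - 1 - κ * cos θ) * cos θ := by
  have hcos : ∫ θ in (0:ℝ)..π, cos θ = 0 := by simp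
  have hcos_sq : ∫ θ in (0:ℝ)..π, cos θ ^ 2 = π / 2 := by simp [integral_cos_sq]
  have hexpand : ∀ θ, (exp (κ * cos θ) - 1 - κ * cos θ) * cos θ =
      exp (κ * cos θ) * cos θ - (cos θ + κ * cos θ ^ 2) := fun θ => by ring
  have hint {g : ℝ → ℝ} (hg : Continuous g) : IntervalIntegrable g MeasureTheory.volume 0 π :=
    hg.intervalIntegrable _ _
  simp_rw [hexpand]
  rw [integral_sub (hint (by fun_prop)) (hint (by fun_prop)),
    integral_add (hint continuous_cos) (hint (by fun_prop)), integral_const_mul, hcos, hcos_sq]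
  simp only [besselI, Nat.cast_one, one_mul]
  field_simp
  ring

lemma abs_besselI_zero_sub_one_le {κ : ℝ} (hκ : |κ| ≤ 1) : |besselI 0 κ - 1| ≤ 2 * |κ| := by
  rw [besselI_zero_sub_one]
  refine abs_inv_pi_mul_integral_le fun θ => ?_
  have h := abs_mul_cos_le κ θ
  calc |exp (κ * cos θ) - 1| ≤ 2 * |κ * cos θ| := abs_exp_sub_one_le (h.trans hκ)
    _ ≤ 2 * |κ| := by gcongr

lemma abs_besselI_one_sub_half_le {κ : ℝ} (hκ : |κ| ≤ 1) : |besselI 1 κ - κ / 2| ≤ κ ^ 2 := by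
  rw [besselI_one_sub_half]
  refine abs_inv_pi_mul_integral_le fun θ => ?_
  have h := abs_mul_cos_le κ θ
  calc |(exp (κ * cos θ) - 1 - κ * cos θ) * cos θ|
      ≤ (κ * cos θ) ^ 2 * 1 := by
        rw [abs_mul]
        exact mul_le_mul (abs_exp_sub_one_sub_id_le (h.trans hκ)) (abs_cos_le_one θ)
          (abs_nonneg _) (sq_nonneg _)
    _ ≤ κ ^ 2 := by rw [mul_one, ← sq_abs, ← sq_abs κ]; gcongr

lemma tendsto_besselI_zero : Tendsto (besselI 0) (𝓝 0) (𝓝 1) := by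
  have habs : Tendsto (fun κ : ℝ => |κ|) (𝓝 0) (𝓝 0) := continuous_abs.tendsto' 0 0 abs_zero
  have h : Tendsto (fun κ => besselI 0 κ - 1) (𝓝 0) (𝓝 0) := by
    refine squeeze_zero_norm' ?_ (by simpa using habs.const_mul 2)
    filter_upwards [habs.eventually (eventually_le_nhds one_pos)] with κ hκ
    exact abs_besselI_zero_sub_one_le hκ
  simpa using h.add_const 1

lemma tendsto_besselI_one_div_self :
    Tendsto (fun κ => besselI 1 κ / κ) (𝓝[≠] 0) (𝓝 (1 / 2)) := by
  have habs : Tendsto (fun κ : ℝ => |κ|) (𝓝 0) (𝓝 0) := continuous_abs.tendsto' 0 0 abs_zero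
  have h : Tendsto (fun κ => besselI 1 κ / κ - 1 / 2) (𝓝[≠] 0) (𝓝 0) := by
    refine squeeze_zero_norm' ?_ (habs.mono_left nhdsWithin_le_nhds)
    filter_upwards [eventually_mem_nhdsWithin,
      nhdsWithin_le_nhds (habs.eventually (eventually_le_nhds one_pos))] with κ (hκ : κ ≠ 0) hκ1
    have hpos : 0 < |κ| := abs_pos.mpr hκ
    calc ‖besselI 1 κ / κ - 1 / 2‖ = |besselI 1 κ - κ / 2| / |κ| := by
          rw [Real.norm_eq_abs, ← abs_div]; congr 1; field_simp
      _ ≤ κ ^ 2 / |κ| := by gcongr; exact abs_besselI_one_sub_half_le hκ1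
      _ = |κ| := by rw [← sq_abs, sq, mul_div_cancel_right₀ _ hpos.ne']
  rw [← zero_add (1 / 2 : ℝ)]
  exact (h.add_const (1 / 2)).congr fun κ => sub_add_cancel _ _

lemma tendsto_A1_div_self : Tendsto (fun κ => A1 κ / κ) (𝓝[≠] 0) (𝓝 (1 / 2)) := by
  have h := tendsto_besselI_one_div_self.div (tendsto_besselI_zero.mono_left nhdsWithin_le_nhds)
    one_ne_zero
  rw [div_one] at h
  exact h.congr fun κ => by rw [Pi.div_apply, A1, div_right_comm]

lemma tendsto_A1 : Tendsto A1 (𝓝[≠] 0) (𝓝 0) := by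
  have h := tendsto_A1_div_self.mul (tendsto_id.mono_left nhdsWithin_le_nhds :
    Tendsto (fun κ : ℝ => κ) (𝓝[≠] 0) (𝓝 0))
  rw [mul_zero] at h
  exact h.congr' (eventually_mem_nhdsWithin.mono fun κ hκ => div_mul_cancel₀ _ hκ)

lemma tendsto_mle_asymptotic_variance :
    Tendsto (fun κ : ℝ => 1 / (1 - A1 κ ^ 2 - A1 κ / κ)) (𝓝[≠] 0) (𝓝 2) := by
  convert (tendsto_const_nhds (x := (1:ℝ))).div ((tendsto_const_nhds (x := (1:ℝ)).sub
    (tendsto_A1.pow 2)).sub tendsto_A1_div_self) (by norm_num) using 2 <;> norm_num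

lemma tendsto_sme_asymptotic_variance :
    Tendsto (fun κ : ℝ => (κ / A1 κ ^ 2) * (2 * κ - 3 * A1 κ)) (𝓝[≠] 0) (𝓝 2) := by
  have h : Tendsto (fun κ => (2 - 3 * (A1 κ / κ)) / (A1 κ / κ) ^ 2) (𝓝[≠] 0) (𝓝 2) := by
    convert ((tendsto_const_nhds (x := (2:ℝ))).sub (tendsto_A1_div_self.const_mul 3)).div
      (tendsto_A1_div_self.pow 2) (by norm_num) using 2 <;> norm_num
  refine h.congr' ?_
  filter_upwards [eventually_mem_nhdsWithin] with κ (hκ : κ ≠ 0)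
  rcases eq_or_ne (A1 κ) 0 with hA | hA
  · simp [hA]
  · field_simp

lemma tendsto_asymptotic_relative_efficiency :
    Tendsto (fun κ : ℝ => A1 κ ^ 2 / ((2 * κ - 3 * A1 κ) * (κ - κ * A1 κ ^ 2 - A1 κ)))
      (𝓝[≠] 0) (𝓝 1) := by
  have h : Tendsto (fun κ => (A1 κ / κ) ^ 2 / ((2 - 3 * (A1 κ / κ)) * (1 - A1 κ ^ 2 - A1 κ / κ)))
      (𝓝[≠] 0) (𝓝 1) := by
    convert (tendsto_A1_div_self.pow 2).div
      (((tendsto_const_nhds (x := (2:ℝ))).sub (tendsto_A1_div_self.const_mul 3)).mul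
        (((tendsto_const_nhds (x := (1:ℝ))).sub (tendsto_A1.pow 2)).sub tendsto_A1_div_self))
      (by norm_num) using 2 <;> norm_num
  refine h.congr' ?_
  filter_upwards [eventually_mem_nhdsWithin] with κ (hκ : κ ≠ 0)
  have e1 : 2 - 3 * (A1 κ / κ) = (2 * κ - 3 * A1 κ) / κ := by field_simp
  have e2 : 1 - A1 κ ^ 2 - A1 κ / κ = (κ - κ * A1 κ ^ 2 - A1 κ) / κ := by field_simp
  rw [e1, e2, div_mul_div_comm, div_pow, ← sq, div_div_div_cancel_right₀ (pow_ne_zero 2 hκ)]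

/-- As `κ → 0⁺`, both asymptotic variances `n·var(κ̂_MLE) = 1/(1 − A₁² − A₁/κ)` and
`n·var(κ̂_SME) = (κ/A₁²)(2κ − 3A₁)` converge to 2; hence the asymptotic relative
efficiency converges to 1. -/
theorem stmt_13 :
    Tendsto (fun κ : ℝ => 1 / (1 - A1 κ ^ 2 - A1 κ / κ))
      (nhdsWithin 0 (Set.Ioi 0)) (nhds 2) ∧
    Tendsto (fun κ : ℝ => (κ / A1 κ ^ 2) * (2 * κ - 3 * A1 κ))
      (nhdsWithin 0 (Set.Ioi 0)) (nhds 2) ∧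
    Tendsto (fun κ : ℝ =>
        A1 κ ^ 2 / ((2 * κ - 3 * A1 κ) * (κ - κ * A1 κ ^ 2 - A1 κ)))
      (nhdsWithin 0 (Set.Ioi 0)) (nhds 1) := by
  have hright : 𝓝[>] (0:ℝ) ≤ 𝓝[≠] 0 := nhdsWithin_mono _ fun _ hκ => ne_of_gt hκ
  exact ⟨tendsto_mle_asymptotic_variance.mono_left hright,
    tendsto_sme_asymptotic_variance.mono_left hright,
    tendsto_asymptotic_relative_efficiency.mono_left hright⟩
end
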